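/- arXiv:1704.00316 — 7 statements merged into one kernel-verified Lean document; each statement's English description precedes it below -/
import Mathlib

section
/- Every chordal graph is either a complete graph or contains two non-adjacent simplicial vertices. -/
open SimpleGraph

variable {V : Type*}

/-- The bull: a triangle 0,1,2 with pendant vertices 3 (adjacent to 0) and 4 (adjacent to 1). -/
def bullGraph : SimpleGraph (Fin 5) :=
  SimpleGraph.fromRel (fun i j =>
    (i = 0 ∧ j = 1) ∨ (i = 0 ∧ j = 2) ∨ (i = 1 ∧ j = 2) ∨ (i = 0 ∧ j = 3) ∨ (i = 1 ∧ j = 4))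

/-- The graph consisting of two independent edges: 0-1 and 2-3. -/
def twoK2 : SimpleGraph (Fin 4) :=
  SimpleGraph.fromRel (fun i j => (i = 0 ∧ j = 1) ∨ (i = 2 ∧ j = 3))

/-- `G` has no induced subgraph isomorphic to `H`. -/
def IndFree {W : Type*} (H : SimpleGraph W) (G : SimpleGraph V) : Prop :=
  IsEmpty (H ↪g G)

/-- A graph is chordal if it has no induced cycle of length at least 4. -/
def Chordal (G : SimpleGraph V) : Prop :=
  ∀ n : ℕ, 4 ≤ n → IndFree (cycleGraph n) G

/-- A cap on a hole of length `n`: a cycle on `ZMod n` together with an extra vertex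
adjacent to exactly the two adjacent hole vertices `0` and `1`. -/
def capGraph (n : ℕ) : SimpleGraph (Option (ZMod n)) :=
  SimpleGraph.fromRel (fun a b =>
    match a, b with
    | some i, some j => j = i + 1
    | none, some i => i = 0 ∨ i = 1
    | _, _ => False)

/-- `x` dominates `y`: they are adjacent and every neighbour of `y` other than `x`
is a neighbour of `x`. -/
def Dominates (G : SimpleGraph V) (x y : V) : Prop :=
  G.Adj x y ∧ ∀ z, G.Adj y z → z ≠ x → G.Adj x z

/-- A graph is reducible if some vertex dominates an adjacent vertex. -/
def Reducible (G : SimpleGraph V) : Prop :=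
  ∃ x y, Dominates G x y

/-- Two adjacent vertices with the same neighbours other than each other. -/
def TrueTwins (G : SimpleGraph V) (x y : V) : Prop :=
  G.Adj x y ∧ ∀ z, z ≠ x → z ≠ y → (G.Adj x z ↔ G.Adj y z)

/-- A vertex is simplicial if its neighbourhood induces a clique. -/
def Simplicial (G : SimpleGraph V) (v : V) : Prop :=
  G.IsClique (G.neighborSet v)

/-- A universal vertex is adjacent to all other vertices. -/
def Universal (G : SimpleGraph V) (v : V) : Prop :=
  ∀ w, w ≠ v → G.Adj v w

/-- A graph is biconnected if it is connected and remains connected after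
deleting any single vertex. -/
def Biconnected (G : SimpleGraph V) : Prop :=
  G.Connected ∧ ∀ v : V, (G.induce ({v}ᶜ : Set V)).Connected

/-- A basic (cap-free) graph: a chordal graph, or a biconnected triangle-free graph
together with at most one additional vertex adjacent to all other vertices. -/
def IsBasic (G : SimpleGraph V) : Prop :=
  Chordal G ∨ (Biconnected G ∧ G.CliqueFree 3) ∨
    (∃ v : V, Universal G v ∧ Biconnected (G.induce ({v}ᶜ : Set V)) ∧
      (G.induce ({v}ᶜ : Set V)).CliqueFree 3)

/-- A one-point cutset: a vertex whose removal disconnects the graph. -/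
def IsCutVertex (G : SimpleGraph V) (v : V) : Prop :=
  ¬ (G.induce ({v}ᶜ : Set V)).Connected

/-- `C` is (the vertex set of) a connected component of `G - v`. -/
def IsComponentOf (G : SimpleGraph V) (v : V) (C : Set V) : Prop :=
  v ∉ C ∧ C.Nonempty ∧ (G.induce C).Connected ∧
    ∀ x ∈ C, ∀ y, G.Adj x y → y ≠ v → y ∈ C

/-- An amalgam partition `(K, A1, B1, A2, B2)` of `G`. -/
structure IsAmalgamPartition (G : SimpleGraph V) (K A1 B1 A2 B2 : Set V) : Prop where
  partition : ∀ v : V, (v ∈ K ∧ v ∉ A1 ∧ v ∉ B1 ∧ v ∉ A2 ∧ v ∉ B2) ∨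
    (v ∉ K ∧ v ∈ A1 ∧ v ∉ B1 ∧ v ∉ A2 ∧ v ∉ B2) ∨
    (v ∉ K ∧ v ∉ A1 ∧ v ∈ B1 ∧ v ∉ A2 ∧ v ∉ B2) ∨
    (v ∉ K ∧ v ∉ A1 ∧ v ∉ B1 ∧ v ∈ A2 ∧ v ∉ B2) ∨
    (v ∉ K ∧ v ∉ A1 ∧ v ∉ B1 ∧ v ∉ A2 ∧ v ∈ B2)
  A1_nonempty : A1.Nonempty
  A2_nonempty : A2.Nonempty
  K_clique : G.IsClique K
  side1_big : 2 ≤ (A1 ∪ B1).ncard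
  side2_big : 2 ≤ (A2 ∪ B2).ncard
  A1A2_complete : ∀ a1 ∈ A1, ∀ a2 ∈ A2, G.Adj a1 a2
  KA1_complete : ∀ k ∈ K, ∀ a ∈ A1, G.Adj k a
  KA2_complete : ∀ k ∈ K, ∀ a ∈ A2, G.Adj k a
  B1_sep : ∀ b ∈ B1, ∀ x ∈ A2 ∪ B2, ¬ G.Adj b x
  B2_sep : ∀ b ∈ B2, ∀ x ∈ A1 ∪ B1, ¬ G.Adj b x

/-- A clique cover of `G`: a finite family of cliques covering all vertices. -/
def IsCliqueCover (G : SimpleGraph V) (𝒞 : Finset (Set V)) : Prop :=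
  (∀ s ∈ 𝒞, G.IsClique s) ∧ ∀ v : V, ∃ s ∈ 𝒞, v ∈ s

/-- The clique cover number `θ(G)`. -/
noncomputable def cliqueCoverNumber (G : SimpleGraph V) : ℕ :=
  sInf {n : ℕ | ∃ 𝒞 : Finset (Set V), IsCliqueCover G 𝒞 ∧ 𝒞.card = n}

/-- A matching of `G`: a finite set of edges, pairwise vertex-disjoint. -/
def IsMatching' (G : SimpleGraph V) (M : Finset (Sym2 V)) : Prop :=
  (↑M : Set (Sym2 V)) ⊆ G.edgeSet ∧
    ∀ e ∈ M, ∀ f ∈ M, e ≠ f → ∀ v : V, v ∈ e → v ∉ f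

/-- The maximum size `m(G)` of a matching of `G`. -/
noncomputable def matchingNumber (G : SimpleGraph V) : ℕ :=
  sSup {n : ℕ | ∃ M : Finset (Sym2 V), IsMatching' G M ∧ M.card = n}

/-- An asteroidal triple: a stable triple such that between any two of its vertices
there is a path avoiding the closed neighbourhood of the third. -/
def IsAT (G : SimpleGraph V) (x y z : V) : Prop :=
  x ≠ y ∧ y ≠ z ∧ x ≠ z ∧ ¬ G.Adj x y ∧ ¬ G.Adj y z ∧ ¬ G.Adj x z ∧
    (∃ p : G.Walk x y, ∀ w ∈ p.support, w ≠ z ∧ ¬ G.Adj z w) ∧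
    (∃ p : G.Walk y z, ∀ w ∈ p.support, w ≠ x ∧ ¬ G.Adj x w) ∧
    (∃ p : G.Walk x z, ∀ w ∈ p.support, w ≠ y ∧ ¬ G.Adj y w)

def ATFree (G : SimpleGraph V) : Prop := ¬ ∃ x y z : V, IsAT G x y z

/-!
Fix a non-universal vertex `a`, a non-neighbour `b`, and let `C` be the component of `b` in
`G - N[a]`. The vertices outside `C` with a neighbour in `C` lie in `N(a)` and form a clique `S`:
two non-adjacent ones, joined by a shortest path through `C`, would close a hole with `a`.
As `a ∉ C ∪ S`, induction applies to `G[C ∪ S]`, which is complete or has two non-adjacent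
simplicial vertices, not both in the clique `S`. A vertex of `C` simplicial in `G[C ∪ S]` is
simplicial in `G`, since its neighbourhood lies in `C ∪ S`. So every non-universal vertex `a` has
a simplicial non-neighbour `s`, and applying this again to `s` gives a second one.
-/

namespace SimpleGraph

variable {G : SimpleGraph V}

theorem cycleGraph_adj_iff_val {n : ℕ} {i j : Fin (n + 2)} :
    (cycleGraph (n + 2)).Adj i j ↔
      i.val + 1 = j.val ∨ j.val + 1 = i.val ∨ (i.val = 0 ∧ j.val = n + 1) ∨
        (j.val = 0 ∧ i.val = n + 1) := by
  rw [cycleGraph_adj']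
  have := i.isLt
  have := j.isLt
  rcases lt_trichotomy i j with h | rfl | h
  · rw [Fin.coe_sub_iff_lt.mpr h, Fin.coe_sub_iff_le.mpr h.le]
    rw [Fin.lt_def] at h
    omega
  · simp only [sub_self, Fin.val_zero]
    omega
  · rw [Fin.coe_sub_iff_lt.mpr h, Fin.coe_sub_iff_le.mpr h.le]
    rw [Fin.lt_def] at h
    omega

theorem Walk.not_adj_getVert_of_length_eq_dist {u v : V} (p : G.Walk u v)
    (hp : p.length = G.dist u v) {i j : ℕ} (hij : i + 1 < j) (hj : j ≤ p.length) :
    ¬ G.Adj (p.getVert i) (p.getVert j) := fun hadj => by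
  have := G.dist_le ((p.take i).append ((p.drop j).cons hadj))
  simp only [Walk.length_append, Walk.take_length, Walk.length_cons, Walk.drop_length] at this
  omega

theorem Walk.exists_isPath_induced_support_subset {x y : V} (p : G.Walk x y) :
    ∃ r : G.Walk x y, r.IsPath ∧ (∀ w ∈ r.support, w ∈ p.support) ∧
      ∀ i j, i + 1 < j → j ≤ r.length → ¬ G.Adj (r.getVert i) (r.getVert j) := by
  let T : Set V := {w | w ∈ p.support}
  obtain ⟨q, hq⟩ := (p.induce T fun _ h => h).reachable.exists_walk_length_eq_dist
  let r : G.Walk x y := q.map (Embedding.induce T).toHom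
  have hr_length : r.length = q.length := Walk.length_map _ _
  have hr_getVert (i : ℕ) : r.getVert i = (q.getVert i).val := Walk.getVert_map _ _ i
  refine ⟨r, (q.isPath_of_length_eq_dist hq).map Subtype.val_injective, fun w hw => ?_,
    fun i j hij hj => ?_⟩
  · obtain ⟨w', -, rfl⟩ := List.mem_map.mp (Walk.support_map _ _ ▸ hw)
    exact w'.2
  · rw [hr_getVert, hr_getVert]
    exact q.not_adj_getVert_of_length_eq_dist hq hij (hr_length ▸ hj)

theorem Walk.nonempty_cycleGraph_embedding {x y a : V} (p : G.Walk x y) (hp : p.IsPath)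
    (hchord : ∀ i j, i + 1 < j → j ≤ p.length → ¬ G.Adj (p.getVert i) (p.getVert j))
    (ha : a ∉ p.support) (hadj : ∀ i ≤ p.length, G.Adj a (p.getVert i) ↔ i = 0 ∨ i = p.length) :
    Nonempty (cycleGraph (p.length + 2) ↪g G) := by
  have hpath : ∀ i j, i ≤ p.length → j ≤ p.length →
      (G.Adj (p.getVert i) (p.getVert j) ↔ i + 1 = j ∨ j + 1 = i) := by
    intro i j hi hj
    refine ⟨fun h => ?_, ?_⟩
    · rcases lt_trichotomy (i + 1) j with hij | hij | hij
      · exact absurd h (hchord i j hij hj)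
      · exact .inl hij
      rcases lt_trichotomy (j + 1) i with hji | hji | hji
      · exact absurd h.symm (hchord j i hji hi)
      · exact .inr hji
      obtain rfl : i = j := by omega
      exact absurd h G.irrefl
    · rintro (rfl | rfl)
      · exact p.adj_getVert_succ (by omega)
      · exact (p.adj_getVert_succ (by omega)).symm
  let f : Fin (p.length + 2) → V := fun i => if i.val ≤ p.length then p.getVert i else a
  have hinj : f.Injective := by
    intro i j hij
    simp only [f] at hij
    split_ifs at hij with hi hj hj
    · exact Fin.ext (hp.getVert_injOn hi hj hij)
    · exact absurd (hij ▸ p.getVert_mem_support i) ha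
    · exact absurd (hij ▸ p.getVert_mem_support j) ha
    · exact Fin.ext (by omega)
  refine ⟨⟨⟨f, hinj⟩, fun {i j} => ?_⟩⟩
  have := i.isLt
  have := j.isLt
  simp only [Function.Embedding.coeFn_mk, cycleGraph_adj_iff_val, f]
  split_ifs with hi hj hj
  · rw [hpath _ _ hi hj]
    omega
  · rw [G.adj_comm, hadj _ hi]
    omega
  · rw [hadj _ hj]
    omega
  · simp only [SimpleGraph.irrefl, false_iff]
    omega

end SimpleGraph

section

variable {G : SimpleGraph V}

theorem Chordal.induce (hG : Chordal G) (s : Set V) : Chordal (G.induce s) :=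
  fun n hn => ⟨fun e => (hG n hn).false ((Embedding.induce s).comp e)⟩

theorem Chordal.adj_of_walk_avoiding_nbhd (hG : Chordal G) {a x y : V} (hax : G.Adj a x)
    (hay : G.Adj a y) (hxy : x ≠ y) (p : G.Walk x y)
    (hp : ∀ w ∈ p.support, w ≠ x → w ≠ y → w ≠ a ∧ ¬ G.Adj a w) : G.Adj x y := by
  by_contra hnxy
  obtain ⟨r, hr, hr_supp, hchord⟩ := p.exists_isPath_induced_support_subset
  have ha : a ∉ r.support := fun h =>
    (hp a (hr_supp a h) (G.ne_of_adj hax) (G.ne_of_adj hay)).1 rfl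
  have hadj : ∀ i ≤ r.length, G.Adj a (r.getVert i) ↔ i = 0 ∨ i = r.length := by
    intro i hi
    refine ⟨fun h => ?_, ?_⟩
    · by_cases hx : r.getVert i = x
      · exact .inl (hr.getVert_injOn hi (Nat.zero_le _) (hx.trans r.getVert_zero.symm))
      by_cases hy : r.getVert i = y
      · exact .inr (hr.getVert_injOn hi (Nat.le_refl _) (hy.trans r.getVert_length.symm))
      exact absurd h (hp _ (hr_supp _ (r.getVert_mem_support i)) hx hy).2
    · rintro (rfl | rfl)
      · simpa using hax
      · simpa using hay
  have hlen : 2 ≤ r.length := by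
    by_contra h
    interval_cases hl : r.length
    · exact hxy (Walk.eq_of_length_eq_zero hl)
    · have := r.adj_getVert_succ (i := 0) (by omega)
      rw [r.getVert_zero, r.getVert_of_length_le hl.le] at this
      exact hnxy this
  obtain ⟨e⟩ := r.nonempty_cycleGraph_embedding hr hchord ha hadj
  exact (hG _ (by omega)).false e

theorem Simplicial.of_induce {s : Set V} {v : V} (hv : v ∈ s) (hN : G.neighborSet v ⊆ s)
    (h : Simplicial (G.induce s) ⟨v, hv⟩) : Simplicial G v := by
  intro x hx y hy hxy
  exact @h ⟨x, hN hx⟩ hx ⟨y, hN hy⟩ hy (Subtype.val_injective.ne_iff.mp hxy)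

theorem eq_top_or_exists_simplicial_of_forall_not_universal
    (hG : ∀ a, ¬ Universal G a → ∃ s, s ≠ a ∧ ¬ G.Adj a s ∧ Simplicial G s) :
    G = ⊤ ∨ ∃ x y : V, x ≠ y ∧ ¬ G.Adj x y ∧ Simplicial G x ∧ Simplicial G y := by
  by_cases h : ∀ a, Universal G a
  · left
    ext u v
    exact ⟨G.ne_of_adj, fun huv => h u v huv.symm⟩
  push Not at h
  obtain ⟨a, ha⟩ := h
  obtain ⟨s, hsa, has, hs⟩ := hG a ha
  obtain ⟨t, hts, hst, ht⟩ := hG s fun h => has (h a hsa.symm).symm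
  exact .inr ⟨s, t, hts.symm, hst, hs, ht⟩

theorem exists_simplicial_mem_of_isClique {C S : Set V} (hS : G.IsClique S) {b : V} (hb : b ∈ C)
    (hN : ∀ c ∈ C, G.neighborSet c ⊆ C ∪ S)
    (hD : G.induce (C ∪ S) = ⊤ ∨ ∃ x y : ↥(C ∪ S), x ≠ y ∧ ¬ (G.induce (C ∪ S)).Adj x y ∧
      Simplicial (G.induce (C ∪ S)) x ∧ Simplicial (G.induce (C ∪ S)) y) :
    ∃ c ∈ C, Simplicial G c := by
  rcases hD with hD | ⟨x, y, hxy, hnxy, hx, hy⟩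
  · refine ⟨b, hb, Simplicial.of_induce (.inl hb) (hN b hb) ?_⟩
    rw [hD]
    exact IsClique.top _
  have hxy' : (x : V) ∈ C ∨ (y : V) ∈ C := by
    by_contra! h
    exact hnxy (hS ((x.2.resolve_left h.1)) (y.2.resolve_left h.2) (Subtype.val_injective.ne hxy))
  rcases hxy' with h | h
  · exact ⟨x, h, Simplicial.of_induce x.2 (hN x h) hx⟩
  · exact ⟨y, h, Simplicial.of_induce y.2 (hN y h) hy⟩

theorem Chordal.exists_simplicial_not_adj [Finite V] (hG : Chordal G) {a : V}
    (ha : ¬ Universal G a) : ∃ s, s ≠ a ∧ ¬ G.Adj a s ∧ Simplicial G s := by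
  induction hn : Nat.card V using Nat.strong_induction_on generalizing V with
  | _ n ih =>
  simp only [Universal, not_forall] at ha
  obtain ⟨b, hba, hab⟩ := ha
  let O : Set V := {w | w ≠ a ∧ ¬ G.Adj a w}
  let C : Set V := {v | ∃ p : G.Walk b v, ∀ w ∈ p.support, w ∈ O}
  let S : Set V := {w | G.Adj a w ∧ ∃ c ∈ C, G.Adj c w}
  have hCO : C ⊆ O := fun v ⟨p, hp⟩ => hp v p.end_mem_support
  have hbC : b ∈ C := ⟨.nil, by simpa using ⟨hba, hab⟩⟩
  have hN : ∀ c ∈ C, G.neighborSet c ⊆ C ∪ S := by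
    rintro c ⟨p, hp⟩ w (hcw : G.Adj c w)
    by_cases hw : w ∈ O
    · refine .inl ⟨p.concat hcw, fun u hu => ?_⟩
      rw [Walk.support_concat, List.mem_append, List.mem_singleton] at hu
      exact hu.elim (hp u) fun h => h ▸ hw
    · refine .inr ⟨?_, c, ⟨p, hp⟩, hcw⟩
      by_contra haw
      exact hw ⟨fun hwa => (hp c p.end_mem_support).2 (hwa ▸ hcw.symm), haw⟩
  have hS : G.IsClique S := by
    rintro x ⟨hax, cx, ⟨px, hpx⟩, hcx⟩ y ⟨hay, cy, ⟨py, hpy⟩, hcy⟩ hxy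
    refine hG.adj_of_walk_avoiding_nbhd hax hay hxy
      ((px.reverse.append py).cons hcx.symm |>.concat hcy) fun w hw hwx hwy => ?_
    have hw' : w ∈ px.support ∨ w ∈ py.support := by
      simp only [Walk.support_concat, Walk.support_cons, Walk.support_append, Walk.support_reverse,
        List.mem_append, List.mem_cons, List.mem_reverse] at hw
      grind [List.mem_of_mem_tail]
    exact hw'.elim (hpx w) (hpy w)
  have haCS : a ∉ C ∪ S := by
    rintro (h | h)
    · exact (hCO h).1 rfl
    · exact G.loopless.irrefl a h.1
  have hlt : Nat.card ↥(C ∪ S) < n := hn ▸ Finite.card_subtype_lt haCS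
  obtain ⟨s, hsC, hs⟩ := exists_simplicial_mem_of_isClique hS hbC hN
    (eq_top_or_exists_simplicial_of_forall_not_universal fun u hu =>
      ih _ hlt (hG.induce _) hu rfl)
  exact ⟨s, (hCO hsC).1, (hCO hsC).2, hs⟩

end

/-- Dirac: a chordal graph is complete or has two non-adjacent simplicial
vertices. -/
theorem stmt1 [Fintype V] (G : SimpleGraph V) (h : Chordal G) :
    G = ⊤ ∨ ∃ x y : V, x ≠ y ∧ ¬ G.Adj x y ∧ Simplicial G x ∧ Simplicial G y :=
  eq_top_or_exists_simplicial_of_forall_not_universal fun _ ha => h.exists_simplicial_not_adj ha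
end

section
/- Let G be a connected, irreducible (bull, C4)-free graph that contains an amalgam partition (K, A1, B1, A2, B2) with A2 a clique of size at least 2. Then this situation leads to a contradiction: G must contain an induced bull or a pair of true twins. -/
open SimpleGraph

variable {V : Type*}

/-!
Take adjacent `a, a'` in the clique `A2`. Since neither dominates the other, `a'` has a
neighbour `z` missing `a` and `a` has a neighbour `w` missing `a'`; such vertices can only lie
in `B2`, so they miss every `a₁ ∈ A1`. The triangle `a a' a₁` with pendants `w` at `a` and `z`
at `a'` is then an induced bull unless `w ∼ z`, and in that case `a a' z w` is an induced `C₄`.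
-/

section InducedSubgraphs

variable {W : Type*} {H : SimpleGraph W} {G : SimpleGraph V}

lemma IndFree.false_of_adj_iff (hH : IndFree H G) {f : W → V} (hf : Function.Injective f)
    (hadj : ∀ i j, G.Adj (f i) (f j) ↔ H.Adj i j) : False :=
  hH.false ⟨⟨f, hf⟩, hadj _ _⟩

lemma injective_of_adj_iff (hH : ∀ i j, i ≠ j → ∃ k, ¬ (H.Adj i k ↔ H.Adj j k)) {f : W → V}
    (hadj : ∀ i j, G.Adj (f i) (f j) ↔ H.Adj i j) : Function.Injective f := by
  intro i j hij
  by_contra hne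
  obtain ⟨k, hk⟩ := hH i j hne
  exact hk ((hadj i k).symm.trans (hij ▸ hadj j k))

lemma IndFree.adj_or_adj_of_cycle (hc : IndFree (cycleGraph 4) G) {a b c d : V}
    (hab : G.Adj a b) (hbc : G.Adj b c) (hcd : G.Adj c d) (hda : G.Adj d a)
    (hac : a ≠ c) (hbd : b ≠ d) : G.Adj a c ∨ G.Adj b d := by
  by_contra! h
  obtain ⟨nac, nbd⟩ := h
  refine hc.false_of_adj_iff (f := ![a, b, c, d]) ?_ ?_
  · intro i j hij
    fin_cases i <;> fin_cases j <;>
      simp_all [hab.ne, hbc.ne, hcd.ne, hda.ne, hab.ne.symm, hbc.ne.symm, hcd.ne.symm,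
        hda.ne.symm, hac.symm, hbd.symm]
  · intro i j
    fin_cases i <;> fin_cases j <;>
      simp +decide [hab, hbc, hcd, hda, hab.symm, hbc.symm, hcd.symm, hda.symm, nac, nbd,
        mt G.adj_symm nac, mt G.adj_symm nbd]

lemma IndFree.adj_of_bull (hb : IndFree bullGraph G) {a b c d e : V}
    (hab : G.Adj a b) (hac : G.Adj a c) (hbc : G.Adj b c) (had : G.Adj a d) (hbe : G.Adj b e)
    (nae : ¬ G.Adj a e) (nbd : ¬ G.Adj b d) (ncd : ¬ G.Adj c d) (nce : ¬ G.Adj c e) :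
    G.Adj d e := by
  by_contra nde
  have hadj : ∀ i j, G.Adj (![a, b, c, d, e] i) (![a, b, c, d, e] j) ↔ bullGraph.Adj i j := by
    intro i j
    fin_cases i <;> fin_cases j <;>
      simp [bullGraph, hab, hac, hbc, had, hbe, hab.symm, hac.symm, hbc.symm, had.symm, hbe.symm,
        nae, nbd, ncd, nce, nde, mt G.adj_symm nae, mt G.adj_symm nbd, mt G.adj_symm ncd,
        mt G.adj_symm nce, mt G.adj_symm nde]
  -- no two vertices of the bull have the same neighbourhood, so injectivity comes for free
  refine hb.false_of_adj_iff (injective_of_adj_iff ?_ hadj) hadj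
  intro i j
  fin_cases i <;> fin_cases j <;> simp +decide [bullGraph]

end InducedSubgraphs

lemma exists_private_neighbor_of_not_reducible {G : SimpleGraph V} (hirr : ¬ Reducible G)
    {x y : V} (hxy : G.Adj x y) : ∃ z, G.Adj y z ∧ z ≠ x ∧ ¬ G.Adj x z := by
  by_contra! h
  exact hirr ⟨x, y, hxy, h⟩

lemma IsAmalgamPartition.mem_B2_of_adj {G : SimpleGraph V} {K A1 B1 A2 B2 : Set V}
    (hA : IsAmalgamPartition G K A1 B1 A2 B2) (hA2 : G.IsClique A2) {u v x : V}
    (hu : u ∈ A2) (hv : v ∈ A2) (hvx : G.Adj v x) (hxu : x ≠ u) (hux : ¬ G.Adj u x) :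
    x ∈ B2 := by
  rcases hA.partition x with h | h | h | h | h
  · exact absurd (hA.KA2_complete x h.1 u hu).symm hux
  · exact absurd (hA.A1A2_complete x h.2.1 u hu).symm hux
  · exact absurd hvx.symm (hA.B1_sep x h.2.2.1 v (Or.inl hv))
  · exact absurd (hA2 hu h.2.2.2.1 hxu.symm) hux
  · exact h.2.2.2.2

theorem stmt5_general (G : SimpleGraph V) (hirr : ¬ Reducible G)
    (hb : IndFree bullGraph G) (hc : IndFree (SimpleGraph.cycleGraph 4) G)
    {K A1 B1 A2 B2 : Set V} (hA : IsAmalgamPartition G K A1 B1 A2 B2)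
    (hA2 : G.IsClique A2) (h2 : 2 ≤ A2.ncard) : False := by
  obtain ⟨⟨a, ha, a', ha', hne⟩, -⟩ := Set.one_lt_ncard_iff_nontrivial_and_finite.mp h2
  have haa' : G.Adj a a' := hA2 ha ha' hne
  obtain ⟨z, ha'z, hza, naz⟩ := exists_private_neighbor_of_not_reducible hirr haa'
  obtain ⟨w, haw, hwa', na'w⟩ := exists_private_neighbor_of_not_reducible hirr haa'.symm
  have hzB2 : z ∈ B2 := hA.mem_B2_of_adj hA2 ha ha' ha'z hza naz
  have hwB2 : w ∈ B2 := hA.mem_B2_of_adj hA2 ha' ha haw hwa' na'w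
  obtain ⟨a1, ha1⟩ := hA.A1_nonempty
  have hwz : G.Adj w z := hb.adj_of_bull haa' (hA.A1A2_complete a1 ha1 a ha).symm
    (hA.A1A2_complete a1 ha1 a' ha').symm haw ha'z naz na'w
    (fun h => hA.B2_sep w hwB2 a1 (Or.inl ha1) h.symm)
    (fun h => hA.B2_sep z hzB2 a1 (Or.inl ha1) h.symm)
  exact (hc.adj_or_adj_of_cycle haa' ha'z hwz.symm haw.symm hza.symm hwa'.symm).elim naz na'w

/-- a connected, irreducible (bull, C4)-free graph cannot have an amalgam
partition in which `A2` is a clique of size at least 2 (this would force an induced bull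
or a pair of true twins, a contradiction). -/
theorem stmt5 (G : SimpleGraph V) (hconn : G.Connected) (hirr : ¬ Reducible G)
    (hb : IndFree bullGraph G) (hc : IndFree (SimpleGraph.cycleGraph 4) G)
    {K A1 B1 A2 B2 : Set V} (hA : IsAmalgamPartition G K A1 B1 A2 B2)
    (hA2 : G.IsClique A2) (h2 : 2 ≤ A2.ncard) : False :=
  stmt5_general G hirr hb hc hA hA2 h2
end

section
/- Every connected (bull, C4)-free graph is either reducible, or basic, or has a one-point cutset. -/
open SimpleGraph

variable {V : Type*}

/-!
If `G` is not reducible, every edge `xy` has a private neighbour of `y`, adjacent to `y` but not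
to `x`. Around a triangle `abc` the private neighbours of `b` and `c` with respect to `a` then
yield, by bull- and `C4`-freeness, a vertex adjacent to `b` and `c` but not to `a`. Doing this
for each corner gives three pairwise nonadjacent such vertices, and two of them together with
`b`, `c` and the third form a bull. So an irreducible connected (bull, `C4`)-free graph is
triangle-free, and it is biconnected unless it has a cut vertex.
-/

namespace SimpleGraph

variable {G : SimpleGraph V}

theorem IndFree.false_of_bull (hb : IndFree bullGraph G) {x₀ x₁ x₂ x₃ x₄ : V}
    (e01 : G.Adj x₀ x₁) (e02 : G.Adj x₀ x₂) (e12 : G.Adj x₁ x₂)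
    (e03 : G.Adj x₀ x₃) (e14 : G.Adj x₁ x₄)
    (n04 : ¬ G.Adj x₀ x₄) (n13 : ¬ G.Adj x₁ x₃) (n23 : ¬ G.Adj x₂ x₃)
    (n24 : ¬ G.Adj x₂ x₄) (n34 : ¬ G.Adj x₃ x₄) : False := by
  have d04 : x₀ ≠ x₄ := fun h => n24 (h ▸ e02.symm)
  have d13 : x₁ ≠ x₃ := fun h => n23 (h ▸ e12.symm)
  have d23 : x₂ ≠ x₃ := fun h => n13 (h ▸ e12)
  have d24 : x₂ ≠ x₄ := fun h => n04 (h ▸ e02)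
  have d34 : x₃ ≠ x₄ := fun h => n04 (h ▸ e03)
  refine hb.false ⟨⟨![x₀, x₁, x₂, x₃, x₄], fun i j h => ?_⟩, fun {i j} => ?_⟩
  · fin_cases i <;> fin_cases j <;>
      simp_all [e01.ne, e02.ne, e12.ne, e03.ne, e14.ne, e01.ne', e02.ne', e12.ne', e03.ne',
        e14.ne', d04.symm, d13.symm, d23.symm, d24.symm, d34.symm]
  · change G.Adj (![x₀, x₁, x₂, x₃, x₄] i) (![x₀, x₁, x₂, x₃, x₄] j) ↔ _
    fin_cases i <;> fin_cases j <;>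
      simp [bullGraph, fromRel_adj, e01, e02, e12, e03, e14, e01.symm, e02.symm, e12.symm,
        e03.symm, e14.symm, n04, n13, n23, n24, n34, mt G.adj_symm n04, mt G.adj_symm n13,
        mt G.adj_symm n23, mt G.adj_symm n24, mt G.adj_symm n34]

theorem IndFree.false_of_cycleGraph_four (hc : IndFree (cycleGraph 4) G) {p q r s : V}
    (hpr : p ≠ r) (hqs : q ≠ s)
    (epq : G.Adj p q) (eqr : G.Adj q r) (ers : G.Adj r s) (esp : G.Adj s p)
    (npr : ¬ G.Adj p r) (nqs : ¬ G.Adj q s) : False := by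
  refine hc.false ⟨⟨![p, q, r, s], fun i j h => ?_⟩, fun {i j} => ?_⟩
  · fin_cases i <;> fin_cases j <;>
      simp_all [epq.ne, eqr.ne, ers.ne, esp.ne, epq.ne', eqr.ne', ers.ne', esp.ne']
  · change G.Adj (![p, q, r, s] i) (![p, q, r, s] j) ↔ _
    fin_cases i <;> fin_cases j <;>
      simp [cycleGraph_adj, epq, eqr, ers, esp, epq.symm, eqr.symm, ers.symm, esp.symm,
        npr, nqs, mt G.adj_symm npr, mt G.adj_symm nqs] <;> decide

theorem exists_adj_not_adj_of_not_reducible (hnr : ¬ Reducible G) {x y : V}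
    (hxy : G.Adj x y) : ∃ z, G.Adj y z ∧ z ≠ x ∧ ¬ G.Adj x z := by
  by_contra! h
  exact hnr ⟨x, y, hxy, h⟩

section BullC4Free

variable (hb : IndFree bullGraph G) (hc : IndFree (cycleGraph 4) G) (hnr : ¬ Reducible G)
include hb hc hnr

theorem exists_adj_adj_not_adj_of_triangle {a b c : V}
    (eab : G.Adj a b) (eac : G.Adj a c) (ebc : G.Adj b c) :
    ∃ z, G.Adj z b ∧ G.Adj z c ∧ ¬ G.Adj z a ∧ z ≠ a := by
  obtain ⟨z₁, hz₁b, hz₁a, nz₁a⟩ := exists_adj_not_adj_of_not_reducible hnr eab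
  obtain ⟨z₂, hz₂c, hz₂a, nz₂a⟩ := exists_adj_not_adj_of_not_reducible hnr eac
  by_cases h₁ : G.Adj z₁ c
  · exact ⟨z₁, hz₁b.symm, h₁, fun h => nz₁a h.symm, hz₁a⟩
  by_cases h₂ : G.Adj z₂ b
  · exact ⟨z₂, h₂, hz₂c.symm, fun h => nz₂a h.symm, hz₂a⟩
  exfalso
  by_cases h₁₂ : G.Adj z₁ z₂
  · exact hc.false_of_cycleGraph_four (fun h : z₁ = c => nz₁a (h ▸ eac))
      (fun h : b = z₂ => nz₂a (h ▸ eab))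
      hz₁b.symm ebc hz₂c h₁₂.symm h₁ (fun h => h₂ h.symm)
  · exact hb.false_of_bull ebc eab.symm eac.symm hz₁b hz₂c (fun h => h₂ h.symm)
      (fun h => h₁ h.symm) nz₁a nz₂a h₁₂

theorem cliqueFree_three_of_not_reducible : G.CliqueFree 3 := by
  classical
  intro s hs
  obtain ⟨a, b, c, eab, eac, ebc, -⟩ := is3Clique_iff.mp hs
  obtain ⟨za, hzab, hzac, nzaa, hzaa⟩ := exists_adj_adj_not_adj_of_triangle hb hc hnr eab eac ebc
  obtain ⟨zb, hzba, hzbc, nzbb, hzbb⟩ :=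
    exists_adj_adj_not_adj_of_triangle hb hc hnr eab.symm ebc eac
  obtain ⟨zc, hzca, hzcb, nzcc, hzcc⟩ :=
    exists_adj_adj_not_adj_of_triangle hb hc hnr eac.symm ebc.symm eab
  -- Two such vertices seen from different corners would close an induced `C4` through an edge.
  have nzazb : ¬ G.Adj za zb := fun h => hc.false_of_cycleGraph_four hzaa hzbb.symm
    hzab eab.symm hzba.symm h.symm nzaa (fun h' => nzbb h'.symm)
  have nzazc : ¬ G.Adj za zc := fun h => hc.false_of_cycleGraph_four hzaa hzcc.symm
    hzac eac.symm hzca.symm h.symm nzaa (fun h' => nzcc h'.symm)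
  have nzbzc : ¬ G.Adj zb zc := fun h => hc.false_of_cycleGraph_four hzbb hzcc.symm
    hzbc ebc.symm hzcb.symm h.symm nzbb (fun h' => nzcc h'.symm)
  exact hb.false_of_bull ebc hzab.symm hzac.symm hzcb.symm hzbc.symm (fun h => nzbb h.symm)
    (fun h => nzcc h.symm) nzazc nzazb (fun h => nzbzc h.symm)

end BullC4Free

end SimpleGraph

theorem stmt6_general (G : SimpleGraph V) (hconn : G.Connected)
    (hb : IndFree bullGraph G) (hc : IndFree (SimpleGraph.cycleGraph 4) G) :
    Reducible G ∨ IsBasic G ∨ ∃ v : V, IsCutVertex G v := by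
  by_cases hred : Reducible G
  · exact Or.inl hred
  by_cases hcut : ∃ v : V, IsCutVertex G v
  · exact Or.inr (Or.inr hcut)
  have hbicon : Biconnected G := ⟨hconn, fun v => not_not.mp fun hv => hcut ⟨v, hv⟩⟩
  exact Or.inr (Or.inl (Or.inr (Or.inl ⟨hbicon, cliqueFree_three_of_not_reducible hb hc hred⟩)))

/-- every connected (bull, C4)-free graph is reducible, or basic, or has a
one-point cutset. -/
theorem stmt6 [Fintype V] (G : SimpleGraph V) (hconn : G.Connected)
    (hb : IndFree bullGraph G) (hc : IndFree (SimpleGraph.cycleGraph 4) G) :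
    Reducible G ∨ IsBasic G ∨ ∃ v : V, IsCutVertex G v :=
  stmt6_general G hconn hb hc
end

section
/- Let G be a connected, irreducible (bull, C4)-free graph with a cut vertex v. Then the neighbourhood of v is a stable (independent) set. -/
/-!
Let `x ∼ y` be neighbours of the cut vertex `v` and let `w ∼ v` lie in a different component of
`G - v` than `x`. A neighbour `t` of `x` with `t ≁ v` must be adjacent to `y`, for otherwise
`x, v, y, t, w` induce a bull. Since `v` does not dominate `x`, some `a ∼ x` has `a ≁ v`; since `y`
does not dominate `x`, some `p ∼ x` has `p ≁ y`. Applying the remark to the triangles `xvy` and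
`xvp` gives `p ∼ v`, `a ∼ y` and `a ∼ p`, so `a, y, v, p` induce a `C₄`.
-/

open SimpleGraph

variable {V : Type*}

lemma IndFree.false_of_bull {G : SimpleGraph V} (hb : IndFree bullGraph G) {x₀ x₁ x₂ x₃ x₄ : V}
    (h01 : G.Adj x₀ x₁) (h02 : G.Adj x₀ x₂) (h12 : G.Adj x₁ x₂)
    (h03 : G.Adj x₀ x₃) (h14 : G.Adj x₁ x₄)
    (h04 : ¬ G.Adj x₀ x₄) (h13 : ¬ G.Adj x₁ x₃) (h23 : ¬ G.Adj x₂ x₃)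
    (h24 : ¬ G.Adj x₂ x₄) (h34 : ¬ G.Adj x₃ x₄) (hne34 : x₃ ≠ x₄) : False := by
  have := h01.ne; have := h02.ne; have := h12.ne; have := h03.ne; have := h14.ne
  have : x₀ ≠ x₄ := by rintro rfl; exact h24 h02.symm
  have : x₁ ≠ x₃ := by rintro rfl; exact h23 h12.symm
  have : x₂ ≠ x₃ := by rintro rfl; exact h13 h12
  have : x₂ ≠ x₄ := by rintro rfl; exact h04 h02
  refine hb.false ⟨⟨![x₀, x₁, x₂, x₃, x₄], fun i j hij => ?_⟩, fun {i j} => ?_⟩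
  · fin_cases i <;> fin_cases j <;> simp_all [eq_comm]
  · change G.Adj (![x₀, x₁, x₂, x₃, x₄] i) (![x₀, x₁, x₂, x₃, x₄] j) ↔ _
    fin_cases i <;> fin_cases j <;> simp_all [bullGraph, G.adj_comm]

lemma IndFree.false_of_cycle4 {G : SimpleGraph V} (hc : IndFree (cycleGraph 4) G)
    {x₀ x₁ x₂ x₃ : V} (h01 : G.Adj x₀ x₁) (h12 : G.Adj x₁ x₂) (h23 : G.Adj x₂ x₃)
    (h03 : G.Adj x₀ x₃) (h02 : ¬ G.Adj x₀ x₂) (h13 : ¬ G.Adj x₁ x₃)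
    (hne02 : x₀ ≠ x₂) (hne13 : x₁ ≠ x₃) : False := by
  have := h01.ne; have := h12.ne; have := h23.ne; have := h03.ne
  refine hc.false ⟨⟨![x₀, x₁, x₂, x₃], fun i j hij => ?_⟩, fun {i j} => ?_⟩
  · fin_cases i <;> fin_cases j <;> simp_all [eq_comm]
  · change G.Adj (![x₀, x₁, x₂, x₃] i) (![x₀, x₁, x₂, x₃] j) ↔ _
    fin_cases i <;> fin_cases j <;> simp_all [cycleGraph_adj, G.adj_comm] <;> decide

lemma exists_adj_ne_not_adj_of_not_reducible {G : SimpleGraph V} (hirr : ¬ Reducible G) {a b : V}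
    (hab : G.Adj a b) : ∃ z, G.Adj b z ∧ z ≠ a ∧ ¬ G.Adj a z := by
  by_contra! h
  exact hirr ⟨a, b, hab, h⟩

lemma SimpleGraph.ComponentCompl.exists_adj_notMem {G : SimpleGraph V} {K : Set V}
    (hG : G.Preconnected) (C : G.ComponentCompl K) {u : V} (huK : u ∉ K) (huC : u ∉ C) :
    ∃ k ∈ K, ∃ w, w ∉ K ∧ w ∉ C ∧ G.Adj k w := by
  obtain ⟨c, hc⟩ := C.nonempty
  obtain ⟨p⟩ := hG c u
  obtain ⟨⟨⟨a, b⟩, hab⟩, -, ha, hb⟩ :=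
    p.exists_boundary_dart (K ∪ C) (Or.inr hc) (by simp [huK, huC])
  simp only [Set.mem_union, not_or] at ha hb
  obtain haK | haC := ha
  · exact ⟨a, haK, b, hb.1, hb.2, hab⟩
  · exact (hb.2 (C.mem_of_adj a b haC hb.1 hab)).elim

lemma IsCutVertex.exists_adj_notMem_componentComplMk {G : SimpleGraph V} {v x : V}
    (hv : IsCutVertex G v) (hG : G.Preconnected) (hx : x ∉ ({v} : Set V)) :
    ∃ w, G.Adj v w ∧ w ∉ G.componentComplMk hx := by
  obtain ⟨u, huv, huC⟩ : ∃ u, u ∉ ({v} : Set V) ∧ u ∉ G.componentComplMk hx := by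
    by_contra! h
    refine hv ((connected_iff_exists_forall_reachable _).2 ⟨⟨x, hx⟩, fun ⟨u, hu⟩ => ?_⟩)
    exact (ConnectedComponent.eq.1 (h u hu).2).symm
  obtain ⟨k, rfl, w, -, hwC, hkw⟩ := (G.componentComplMk hx).exists_adj_notMem hG huv huC
  exact ⟨w, hkw, hwC⟩

lemma adj_of_bullFree_of_mem_componentCompl {G : SimpleGraph V} (hb : IndFree bullGraph G)
    {v x y t w : V} {C : G.ComponentCompl {v}} (hxC : x ∈ C) (hvw : G.Adj v w) (hwC : w ∉ C)
    (hvx : G.Adj v x) (hvy : G.Adj v y) (hxy : G.Adj x y) (hxt : G.Adj x t)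
    (hvt : ¬ G.Adj v t) (htv : t ≠ v) : G.Adj y t := by
  have hnw : ∀ c ∈ C, ¬ G.Adj c w := fun c hc hcw => hwC (C.mem_of_adj c w hc hvw.ne' hcw)
  have hyC := C.mem_of_adj x y hxC hvy.ne' hxy
  have htC := C.mem_of_adj x t hxC htv hxt
  by_contra hyt
  exact hb.false_of_bull hvx.symm hxy hvy hxt hvw (hnw x hxC) hvt hyt (hnw y hyC) (hnw t htC)
    (by rintro rfl; exact hwC htC)

/-- in a connected, irreducible (bull, C4)-free graph, the neighbourhood
of any cut vertex is a stable set. -/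
theorem stmt7 (G : SimpleGraph V) (hconn : G.Connected) (hirr : ¬ Reducible G)
    (hb : IndFree bullGraph G) (hc : IndFree (SimpleGraph.cycleGraph 4) G)
    (v : V) (hv : IsCutVertex G v) :
    ∀ x ∈ G.neighborSet v, ∀ y ∈ G.neighborSet v, ¬ G.Adj x y := by
  intro x hvx y hvy hxy
  obtain ⟨w, hvw, hwC⟩ := hv.exists_adj_notMem_componentComplMk hconn.preconnected hvx.ne'
  have hxC := G.componentComplMk_mem (K := {v}) hvx.ne'
  have key : ∀ {y t}, G.Adj v y → G.Adj x y → G.Adj x t → ¬ G.Adj v t → t ≠ v → G.Adj y t :=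
    adj_of_bullFree_of_mem_componentCompl hb hxC hvw hwC hvx
  obtain ⟨a, hxa, hav, hva⟩ := exists_adj_ne_not_adj_of_not_reducible hirr hvx
  obtain ⟨p, hxp, hpy, hyp⟩ := exists_adj_ne_not_adj_of_not_reducible hirr hxy.symm
  have hya : G.Adj y a := key hvy hxy hxa hva hav
  have hvp : G.Adj v p := by
    by_contra hvp
    exact hyp (key hvy hxy hxp hvp (by rintro rfl; exact hyp hvy.symm))
  have hpa : G.Adj p a := key hvp hxp hxa hva hav
  exact hc.false_of_cycle4 hya.symm hvy.symm hvp hpa.symm (mt Adj.symm hva) hyp hav hpy.symm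
end

section
/- Let G be a connected, irreducible (bull, C4)-free graph with a cut vertex v, let C_i be a component of G − v, and let N_i = N(v) ∩ C_i. If x and y are adjacent vertices of N_i, then x and y have exactly the same neighbours in M_i = C_i − N_i. -/
open SimpleGraph

variable {V : Type*}

set_option maxHeartbeats 2000000 in
/-- with `v` a cut vertex, `C` a component of `G - v`, `N_i = N(v) ∩ C`,
adjacent vertices `x, y ∈ N_i` have exactly the same neighbours in `M_i = C - N_i`. -/
theorem stmt8 (G : SimpleGraph V) (hconn : G.Connected) (hirr : ¬ Reducible G)
    (hb : IndFree bullGraph G) (hc : IndFree (SimpleGraph.cycleGraph 4) G)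
    (v : V) (hv : IsCutVertex G v) {C : Set V} (hC : IsComponentOf G v C)
    {x y : V} (hx : x ∈ C ∩ G.neighborSet v) (hy : y ∈ C ∩ G.neighborSet v)
    (hxy : G.Adj x y) :
    ∀ z ∈ C \ G.neighborSet v, (G.Adj x z ↔ G.Adj y z) := by
  obtain ⟨hvC, hCne, hCconn, hclose⟩ := hC
  -- obtain a vertex outside C ∪ {v}
  have hw : ∃ w, w ∉ C ∧ w ≠ v := by
    by_contra h
    push_neg at h
    apply hv
    have hset : ({v}ᶜ : Set V) = C := by
      ext w
      simp only [Set.mem_compl_iff, Set.mem_singleton_iff]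
      constructor
      · intro hne; by_contra hc; exact hne (h w hc)
      · intro hc hne; exact hvC (hne ▸ hc)
    rw [hset]; exact hCconn
  obtain ⟨w, hwC, hwv⟩ := hw
  -- obtain u ∉ C adjacent to v
  have hu : ∃ u, u ∉ C ∧ G.Adj u v := by
    have hmain : ∀ (w' x0 : V) (p : G.Walk w' x0), w' ∉ C → w' ≠ v → x0 ∈ C →
        ∃ u, u ∉ C ∧ G.Adj u v := by
      intro w' x0 p
      induction p with
      | nil => intro hwC' _ hx0; exact absurd hx0 hwC'
      | @cons a b c hadj q ih =>
        intro haC hav hcC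
        by_cases hbv : b = v
        · exact ⟨a, haC, hbv ▸ hadj⟩
        · by_cases hbC : b ∈ C
          · exact absurd (hclose b hbC a hadj.symm hav) haC
          · exact ih hbC hbv hcC
    exact hmain w x ((hconn.preconnected w x).some) hwC hwv hx.1
  obtain ⟨u, huC, huv⟩ := hu
  have huv' : u ≠ v := G.ne_of_adj huv
  -- key one-directional claim
  have key : ∀ a b : V, a ∈ C → b ∈ C → G.Adj v a → G.Adj v b → G.Adj a b →
      ∀ z ∈ C \ G.neighborSet v, G.Adj a z → G.Adj b z := by
    intro a b haC hbC hva hvb hab z hz haz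
    by_contra hbz
    have hzC : z ∈ C := hz.1
    have hzv : ¬ G.Adj v z := hz.2
    -- non-adjacencies with u
    have hnadj : ∀ c, c ∈ C → ¬ G.Adj c u := by
      intro c hc hcu
      exact huC (hclose c hc u hcu huv')
    have hau : ¬ G.Adj a u := hnadj a haC
    have hbu : ¬ G.Adj b u := hnadj b hbC
    have hzu : ¬ G.Adj z u := hnadj z hzC
    -- distinctness
    have hab' : a ≠ b := G.ne_of_adj hab
    have hav : a ≠ v := fun h => G.irrefl (h ▸ hva)
    have hbv : b ≠ v := fun h => G.irrefl (h ▸ hvb)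
    have hza : z ≠ a := fun h => G.irrefl (h ▸ haz)
    have hzb : z ≠ b := fun h => hzv (h ▸ hvb)
    have hzv' : z ≠ v := fun h => hvC (h ▸ hzC)
    have hua : u ≠ a := fun h => huC (h ▸ haC)
    have hub : u ≠ b := fun h => huC (h ▸ hbC)
    have huz : u ≠ z := fun h => huC (h ▸ hzC)
    -- build a bull embedding: 0 ↦ a, 1 ↦ v, 2 ↦ b, 3 ↦ z, 4 ↦ u
    have hemb : bullGraph ↪g G := by
      refine ⟨⟨![a, v, b, z, u], ?_⟩, ?_⟩
      · intro i j hij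
        fin_cases i <;> fin_cases j <;>
          simp_all [Matrix.cons_val_zero, Matrix.cons_val_one] <;>
          first
            | rfl
            | (exfalso; first
                | exact hab' hij | exact hab' hij.symm
                | exact hav hij | exact hav hij.symm
                | exact hbv hij | exact hbv hij.symm
                | exact hza hij | exact hza hij.symm
                | exact hzb hij | exact hzb hij.symm
                | exact hzv' hij | exact hzv' hij.symm
                | exact hua hij | exact hua hij.symm
                | exact hub hij | exact hub hij.symm
                | exact huz hij | exact huz hij.symm)
      · intro i j
        fin_cases i <;> fin_cases j <;>
          simp only [bullGraph, SimpleGraph.fromRel_adj, Matrix.cons_val_zero,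
            Matrix.cons_val_one, Matrix.head_cons, Matrix.cons_val_two,
            Matrix.tail_cons, Matrix.cons_val_three, Matrix.cons_val_four,
            Matrix.cons_val_succ] <;>
          first
            | exact iff_of_true hab (by decide)
            | exact iff_of_true hab.symm (by decide)
            | exact iff_of_true hva (by decide)
            | exact iff_of_true hva.symm (by decide)
            | exact iff_of_true hvb (by decide)
            | exact iff_of_true hvb.symm (by decide)
            | exact iff_of_true haz (by decide)
            | exact iff_of_true haz.symm (by decide)
            | exact iff_of_true huv (by decide)
            | exact iff_of_true huv.symm (by decide)
            | exact iff_of_false hbz (by decide)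
            | exact iff_of_false (fun h => hbz h.symm) (by decide)
            | exact iff_of_false hzv (by decide)
            | exact iff_of_false (fun h => hzv h.symm) (by decide)
            | exact iff_of_false hau (by decide)
            | exact iff_of_false (fun h => hau h.symm) (by decide)
            | exact iff_of_false hbu (by decide)
            | exact iff_of_false (fun h => hbu h.symm) (by decide)
            | exact iff_of_false hzu (by decide)
            | exact iff_of_false (fun h => hzu h.symm) (by decide)
            | exact iff_of_false (G.irrefl) (by decide)
    exact hb.false hemb
  intro z hz
  exact ⟨fun h => key x y hx.1 hy.1 hx.2 hy.2 hxy z hz h,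
         fun h => key y x hy.1 hx.1 hy.2 hx.2 hxy.symm z hz h⟩
end

section
/- If G is a graph with adjacent vertices x and y such that x dominates y, then θ(G) = θ(G − x), where θ is the clique cover number. -/
open SimpleGraph

variable {V : Type*}

lemma ccn_le (G : SimpleGraph V) {𝒞 : Finset (Set V)} (h : IsCliqueCover G 𝒞) :
    cliqueCoverNumber G ≤ 𝒞.card :=
  Nat.sInf_le ⟨𝒞, h, rfl⟩

lemma exists_cover [Finite V] (G : SimpleGraph V) :
    ∃ 𝒞 : Finset (Set V), IsCliqueCover G 𝒞 := by
  classical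
  cases nonempty_fintype V
  refine ⟨Finset.univ.image (fun v => ({v} : Set V)), ?_, ?_⟩
  · intro s hs
    simp only [Finset.mem_image] at hs
    obtain ⟨v, -, rfl⟩ := hs
    exact G.isClique_singleton v
  · intro v
    exact ⟨{v}, Finset.mem_image_of_mem _ (Finset.mem_univ v), rfl⟩

lemma exists_min_cover [Finite V] (G : SimpleGraph V) :
    ∃ 𝒞 : Finset (Set V), IsCliqueCover G 𝒞 ∧ 𝒞.card = cliqueCoverNumber G := by
  obtain ⟨𝒞, h𝒞⟩ := exists_cover G
  have : cliqueCoverNumber G ∈ {n : ℕ | ∃ 𝒞 : Finset (Set V), IsCliqueCover G 𝒞 ∧ 𝒞.card = n} :=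
    Nat.sInf_mem ⟨𝒞.card, 𝒞, h𝒞, rfl⟩
  obtain ⟨𝒟, h1, h2⟩ := this
  exact ⟨𝒟, h1, h2⟩

/-- if `x` dominates an adjacent vertex `y`, then `θ(G) = θ(G - x)`. -/
theorem stmt11 [Fintype V] (G : SimpleGraph V) {x y : V} (h : Dominates G x y) :
    cliqueCoverNumber G = cliqueCoverNumber (G.induce ({x}ᶜ : Set V)) := by
  classical
  have hyx : y ≠ x := h.1.ne'
  have hymem : y ∈ ({x}ᶜ : Set V) := by simpa using hyx
  set y' : ({x}ᶜ : Set V) := ⟨y, hymem⟩ with hy'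
  apply le_antisymm
  · -- θ(G) ≤ θ(G - x)
    obtain ⟨𝒟, ⟨hcl, hcov⟩, hcard⟩ := exists_min_cover (G.induce ({x}ᶜ : Set V))
    set f : Set ({x}ᶜ : Set V) → Set V :=
      fun t => if y' ∈ t then (Subtype.val '' t) ∪ {x} else Subtype.val '' t with hf
    have hcl' : ∀ t ∈ 𝒟, G.IsClique (f t) := by
      intro t ht
      have himg : G.IsClique (Subtype.val '' t) := by
        rintro _ ⟨a, ha, rfl⟩ _ ⟨b, hb, rfl⟩ hab
        have : a ≠ b := fun e => hab (by rw [e])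
        exact hcl t ht ha hb this
      by_cases hyt : y' ∈ t
      · simp only [hf, if_pos hyt]
        rintro a (⟨a', ha', rfl⟩ | ha) b (⟨b', hb', rfl⟩ | hb) hab
        · exact himg ⟨a', ha', rfl⟩ ⟨b', hb', rfl⟩ hab
        · -- b = x, a = a'.val
          simp only [Set.mem_singleton_iff] at hb; subst hb
          by_cases hay : a' = y'
          · subst hay; exact h.1.symm
          · have hadj : G.Adj y a'.val := by
              have := hcl t ht hyt ha' (Ne.symm hay)
              simpa [SimpleGraph.comap_adj] using this
            exact (h.2 a'.val hadj a'.2).symm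
        · simp only [Set.mem_singleton_iff] at ha; subst ha
          by_cases hby : b' = y'
          · subst hby; exact h.1
          · have hadj : G.Adj y b'.val := by
              have := hcl t ht hyt hb' (Ne.symm hby)
              simpa [SimpleGraph.comap_adj] using this
            exact h.2 b'.val hadj b'.2
        · simp only [Set.mem_singleton_iff] at ha hb
          exact absurd (ha.trans hb.symm) hab
      · simpa only [hf, if_neg hyt] using himg
    have hcov' : ∀ v : V, ∃ t ∈ 𝒟, v ∈ f t := by
      intro v
      by_cases hvx : v = x
      · obtain ⟨t, ht, hyt⟩ := hcov y'
        exact ⟨t, ht, by simp [hf, if_pos hyt, hvx]⟩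
      · obtain ⟨t, ht, hvt⟩ := hcov ⟨v, by simpa using hvx⟩
        refine ⟨t, ht, ?_⟩
        by_cases hyt : y' ∈ t
        · simp only [hf, if_pos hyt]
          exact Or.inl ⟨_, hvt, rfl⟩
        · simp only [hf, if_neg hyt]
          exact ⟨_, hvt, rfl⟩
    calc cliqueCoverNumber G ≤ (𝒟.image f).card := by
          refine ccn_le G ⟨?_, ?_⟩
          · intro s hs
            obtain ⟨t, ht, rfl⟩ := Finset.mem_image.mp hs
            exact hcl' t ht
          · intro v
            obtain ⟨t, ht, hv⟩ := hcov' v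
            exact ⟨f t, Finset.mem_image_of_mem f ht, hv⟩
      _ ≤ 𝒟.card := Finset.card_image_le
      _ = _ := hcard
  · -- θ(G - x) ≤ θ(G)
    obtain ⟨𝒞, ⟨hcl, hcov⟩, hcard⟩ := exists_min_cover G
    set g : Set V → Set ({x}ᶜ : Set V) := fun s => Subtype.val ⁻¹' s with hg
    calc cliqueCoverNumber (G.induce ({x}ᶜ : Set V)) ≤ (𝒞.image g).card := by
          refine ccn_le _ ⟨?_, ?_⟩
          · intro s hs
            obtain ⟨t, ht, rfl⟩ := Finset.mem_image.mp hs
            intro a ha b hb hab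
            have : G.Adj a.val b.val :=
              hcl t ht ha hb (fun e => hab (Subtype.ext e))
            simpa [SimpleGraph.comap_adj] using this
          · intro v
            obtain ⟨t, ht, hv⟩ := hcov v.val
            exact ⟨g t, Finset.mem_image_of_mem g ht, hv⟩
      _ ≤ 𝒞.card := Finset.card_image_le
      _ = _ := hcard
end

section
/- Let G be a graph with a cut vertex v, and let C be the union of some components of G − v and G' the subgraph induced by V(G) − C. Let G_i be the subgraph induced by C ∪ {v}. If G_i has a minimum clique cover in which {v} is a singleton clique, then θ(G) = θ(G') + θ(G_i − v). -/
open SimpleGraph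

variable {V : Type*}

section Aux

lemma cover_exists [Fintype V] (G : SimpleGraph V) :
    ∃ 𝒞 : Finset (Set V), IsCliqueCover G 𝒞 := by
  classical
  refine ⟨Finset.univ.image (fun x => ({x} : Set V)), ?_, ?_⟩
  · intro s hs
    simp only [Finset.mem_image] at hs
    obtain ⟨x, -, rfl⟩ := hs
    exact Set.pairwise_singleton x G.Adj
  · intro x
    exact ⟨{x}, Finset.mem_image_of_mem _ (Finset.mem_univ x), rfl⟩

lemma theta_le_card [Fintype V] {G : SimpleGraph V} {𝒞 : Finset (Set V)}
    (h : IsCliqueCover G 𝒞) : cliqueCoverNumber G ≤ 𝒞.card :=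
  Nat.sInf_le ⟨𝒞, h, rfl⟩

lemma theta_spec [Fintype V] (G : SimpleGraph V) :
    ∃ 𝒞 : Finset (Set V), IsCliqueCover G 𝒞 ∧ 𝒞.card = cliqueCoverNumber G := by
  obtain ⟨𝒞, h⟩ := cover_exists G
  have hm : 𝒞.card ∈ {n : ℕ | ∃ 𝒟 : Finset (Set V), IsCliqueCover G 𝒟 ∧ 𝒟.card = n} :=
    ⟨𝒞, h, rfl⟩
  exact Nat.sInf_mem ⟨_, hm⟩

lemma isClique_image {G : SimpleGraph V} {A : Set V} {t : Set A}
    (h : (G.induce A).IsClique t) : G.IsClique (Subtype.val '' t) := by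
  rintro x ⟨a, ha, rfl⟩ y ⟨b, hb, rfl⟩ hxy
  exact h ha hb (fun e => hxy (by rw [e]))

lemma isClique_preimage {G : SimpleGraph V} {A : Set V} {s : Set V}
    (h : G.IsClique s) : (G.induce A).IsClique {x : A | (x : V) ∈ s} := by
  intro x hx y hy hxy
  exact h hx hy (fun e => hxy (Subtype.ext e))

/-- If a finite family of cliques of `G`, each contained in `A`, covers `A`,
then `θ(G[A]) ≤` its cardinality. -/
lemma theta_induce_le [Fintype V] {G : SimpleGraph V} {A : Set V} {𝒟 : Finset (Set V)}
    (hcl : ∀ s ∈ 𝒟, G.IsClique s) (hcov : ∀ x ∈ A, ∃ s ∈ 𝒟, x ∈ s) :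
    cliqueCoverNumber (G.induce A) ≤ 𝒟.card := by
  classical
  refine le_trans (theta_le_card (𝒞 := 𝒟.image (fun s => {x : A | (x : V) ∈ s})) ?_)
    (Finset.card_image_le)
  constructor
  · intro t ht
    simp only [Finset.mem_image] at ht
    obtain ⟨s, hs, rfl⟩ := ht
    exact isClique_preimage (hcl s hs)
  · intro x
    obtain ⟨s, hs, hxs⟩ := hcov x x.2
    exact ⟨_, Finset.mem_image_of_mem _ hs, hxs⟩

end Aux

/-- `v` a cut vertex, `C` a union of components of `G - v`,
`G' = G[V - C]`, `G_i = G[C ∪ {v}]`. If `G_i` has a minimum clique cover in which `{v}`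
is a singleton clique, then `θ(G) = θ(G') + θ(G_i - v)`. -/
theorem stmt12 [Fintype V] (G : SimpleGraph V) (v : V) (hv : IsCutVertex G v)
    (C : Set V) (hvC : v ∉ C) (hCne : C.Nonempty)
    (hclosed : ∀ x ∈ C, ∀ y, G.Adj x y → y ≠ v → y ∈ C)
    (hmin : ∃ 𝒞 : Finset (Set (insert v C : Set V)),
      IsCliqueCover (G.induce (insert v C)) 𝒞 ∧
      𝒞.card = cliqueCoverNumber (G.induce (insert v C)) ∧
      ({⟨v, Set.mem_insert v C⟩} : Set (insert v C : Set V)) ∈ 𝒞) :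
    cliqueCoverNumber G =
      cliqueCoverNumber (G.induce (Cᶜ : Set V)) + cliqueCoverNumber (G.induce C) := by
  classical
  -- Step 2: θ(G[C]) + 1 ≤ θ(G[C ∪ {v}])
  have step2 : cliqueCoverNumber (G.induce C) + 1 ≤
      cliqueCoverNumber (G.induce (insert v C : Set V)) := by
    obtain ⟨𝒞, ⟨hcl, hcov⟩, hcard, hvmem⟩ := hmin
    set v' : (insert v C : Set V) := ⟨v, Set.mem_insert v C⟩
    set F : Set (insert v C : Set V) → Set C :=
      fun s => {x : C | (⟨x, Set.mem_insert_of_mem v x.2⟩ : (insert v C : Set V)) ∈ s}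
    have hθ : cliqueCoverNumber (G.induce C) ≤ (𝒞.erase {v'}).card := by
      refine le_trans (theta_le_card (𝒞 := (𝒞.erase {v'}).image F) ?_)
        Finset.card_image_le
      constructor
      · intro t ht
        simp only [Finset.mem_image] at ht
        obtain ⟨s, hs, rfl⟩ := ht
        intro x hx y hy hxy
        exact hcl s (Finset.mem_of_mem_erase hs) hx hy
          (fun e => hxy (Subtype.ext congr(($e : (insert v C : Set V)).1)))
      · intro x
        obtain ⟨s, hs, hxs⟩ := hcov ⟨x, Set.mem_insert_of_mem v x.2⟩
        have hsne : s ≠ {v'} := by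
          rintro rfl
          have he : (⟨x, Set.mem_insert_of_mem v x.2⟩ : (insert v C : Set V)) = v' :=
            Set.mem_singleton_iff.1 hxs
          have hxv : (x : V) = v := congrArg Subtype.val he
          exact hvC (hxv ▸ x.2)
        exact ⟨F s, Finset.mem_image_of_mem _ (Finset.mem_erase.2 ⟨hsne, hs⟩), hxs⟩
    have h1 : 1 ≤ 𝒞.card := Finset.card_pos.2 ⟨_, hvmem⟩
    have h2 : (𝒞.erase {v'}).card = 𝒞.card - 1 := Finset.card_erase_of_mem hvmem
    omega
  -- Step 1: θ(G) ≤ θ(G[Cᶜ]) + θ(G[C])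
  have step1 : cliqueCoverNumber G ≤
      cliqueCoverNumber (G.induce (Cᶜ : Set V)) + cliqueCoverNumber (G.induce C) := by
    obtain ⟨𝒞₁, ⟨hcl1, hcov1⟩, hc1⟩ := theta_spec (G.induce (Cᶜ : Set V))
    obtain ⟨𝒞₂, ⟨hcl2, hcov2⟩, hc2⟩ := theta_spec (G.induce C)
    set D₁ := 𝒞₁.image (fun s => (Subtype.val '' s : Set V))
    set D₂ := 𝒞₂.image (fun s => (Subtype.val '' s : Set V))
    have hcover : IsCliqueCover G (D₁ ∪ D₂) := by
      constructor
      · intro s hs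
        rcases Finset.mem_union.1 hs with h | h <;>
        · simp only [D₁, D₂, Finset.mem_image] at h
          obtain ⟨t, ht, rfl⟩ := h
          first
          | exact isClique_image (hcl1 t ht)
          | exact isClique_image (hcl2 t ht)
      · intro x
        by_cases hx : x ∈ C
        · obtain ⟨s, hs, hxs⟩ := hcov2 ⟨x, hx⟩
          exact ⟨_, Finset.mem_union_right _ (Finset.mem_image_of_mem _ hs),
            ⟨⟨x, hx⟩, hxs, rfl⟩⟩
        · obtain ⟨s, hs, hxs⟩ := hcov1 ⟨x, hx⟩
          exact ⟨_, Finset.mem_union_left _ (Finset.mem_image_of_mem _ hs),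
            ⟨⟨x, hx⟩, hxs, rfl⟩⟩
    calc cliqueCoverNumber G ≤ (D₁ ∪ D₂).card := theta_le_card hcover
      _ ≤ D₁.card + D₂.card := Finset.card_union_le _ _
      _ ≤ 𝒞₁.card + 𝒞₂.card := add_le_add Finset.card_image_le Finset.card_image_le
      _ = _ := by rw [hc1, hc2]
  -- Step 3: θ(G[Cᶜ]) + θ(G[C]) ≤ θ(G)
  have step3 : cliqueCoverNumber (G.induce (Cᶜ : Set V)) + cliqueCoverNumber (G.induce C) ≤
      cliqueCoverNumber G := by
    obtain ⟨𝒟, ⟨hcl, hcov⟩, hcard⟩ := theta_spec G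
    set 𝒟₁ := 𝒟.filter (fun s => (s ∩ C).Nonempty) with h𝒟₁
    set 𝒟₂ := 𝒟.filter (fun s => ¬ (s ∩ C).Nonempty) with h𝒟₂
    have hcards : 𝒟₁.card + 𝒟₂.card = 𝒟.card :=
      Finset.card_filter_add_card_filter_not _
    -- cliques meeting C are contained in insert v C
    have hsub1 : ∀ s ∈ 𝒟₁, s ⊆ insert v C := by
      intro s hs x hx
      obtain ⟨hs𝒟, c, hcs, hcC⟩ := Finset.mem_filter.1 hs
      by_cases hxc : x = c
      · exact Set.mem_insert_of_mem v (hxc ▸ hcC)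
      · by_cases hxv : x = v
        · exact hxv ▸ Set.mem_insert v C
        · exact Set.mem_insert_of_mem v
            (hclosed c hcC x (hcl s hs𝒟 hcs hx (Ne.symm hxc)) hxv)
    have hsub2 : ∀ s ∈ 𝒟₂, s ⊆ (Cᶜ : Set V) := by
      intro s hs x hx hxC
      exact (Finset.mem_filter.1 hs).2 ⟨x, hx, hxC⟩
    -- every x ∈ Cᶜ with x ≠ v is covered by 𝒟₂
    have hcov2 : ∀ x ∈ (Cᶜ : Set V), x ≠ v → ∃ s ∈ 𝒟₂, x ∈ s := by
      intro x hx hxv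
      obtain ⟨s, hs, hxs⟩ := hcov x
      refine ⟨s, Finset.mem_filter.2 ⟨hs, fun hne => ?_⟩, hxs⟩
      rcases hsub1 s (Finset.mem_filter.2 ⟨hs, hne⟩) hxs with h | h
      · exact hxv h
      · exact hx h
    -- every x ∈ C is covered by 𝒟₁
    have hcov1 : ∀ x ∈ C, ∃ s ∈ 𝒟₁, x ∈ s := by
      intro x hx
      obtain ⟨s, hs, hxs⟩ := hcov x
      exact ⟨s, Finset.mem_filter.2 ⟨hs, ⟨x, hxs, hx⟩⟩, hxs⟩
    by_cases hcase : ∃ s ∈ 𝒟, v ∈ s ∧ (s ∩ C).Nonempty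
    · -- Case A
      obtain ⟨s₀, hs₀, hvs₀, hs₀C⟩ := hcase
      have hθi : cliqueCoverNumber (G.induce (insert v C : Set V)) ≤ 𝒟₁.card := by
        refine theta_induce_le (fun s hs => hcl s (Finset.mem_filter.1 hs).1) ?_
        intro x hx
        rcases hx with rfl | hx
        · exact ⟨s₀, Finset.mem_filter.2 ⟨hs₀, hs₀C⟩, hvs₀⟩
        · exact hcov1 x hx
      have hθ' : cliqueCoverNumber (G.induce (Cᶜ : Set V)) ≤ 𝒟₂.card + 1 := by
        refine le_trans (theta_induce_le (𝒟 := insert ({v} : Set V) 𝒟₂) ?_ ?_)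
          (le_trans (Finset.card_insert_le _ _) (by omega))
        · intro s hs
          rcases Finset.mem_insert.1 hs with rfl | hs
          · exact Set.pairwise_singleton v G.Adj
          · exact hcl s (Finset.mem_filter.1 hs).1
        · intro x hx
          by_cases hxv : x = v
          · exact ⟨{v}, Finset.mem_insert_self _ _, by simp [hxv]⟩
          · obtain ⟨s, hs, hxs⟩ := hcov2 x hx hxv
            exact ⟨s, Finset.mem_insert_of_mem hs, hxs⟩
      omega
    · -- Case B: no clique containing v meets C
      push_neg at hcase
      have hθC : cliqueCoverNumber (G.induce C) ≤ 𝒟₁.card := by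
        refine theta_induce_le (fun s hs => hcl s (Finset.mem_filter.1 hs).1) hcov1
      have hθ' : cliqueCoverNumber (G.induce (Cᶜ : Set V)) ≤ 𝒟₂.card := by
        refine theta_induce_le (fun s hs => hcl s (Finset.mem_filter.1 hs).1) ?_
        intro x hx
        by_cases hxv : x = v
        · subst hxv
          obtain ⟨s, hs, hxs⟩ := hcov x
          exact ⟨s, Finset.mem_filter.2 ⟨hs, by
            rw [Set.not_nonempty_iff_eq_empty]; exact hcase s hs hxs⟩, hxs⟩
        · exact hcov2 x hx hxv
      omega
  omega
end
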